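/- arXiv:cs/0402060 — 2 statements merged into one kernel-verified Lean document; each statement's English description precedes it below -/
import Mathlib

section
/- If H : Z_2 → Z_2 is compatible (i.e., 1-Lipschitz with respect to the 2-adic metric) and ergodic, then the conjugate m-variate mapping H^B = B^{-1} ∘ H ∘ B : (Z_2)^m → (Z_2)^m is compatible and ergodic (i.e., induces on ((Z/2^n Z)^m) a permutation with a single cycle of length 2^{mn}, for every n ≥ 1). -/
open scoped BigOperators

/-- The `j`-th binary digit of a 2-adic integer, as an element of `ZMod 2`. -/
noncomputable def bit2 (j : ℕ) (x : ℤ_[2]) : ZMod 2 := ((x.appr (j+1) / 2^j : ℕ) : ZMod 2)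

/-- Compatibility = 1-Lipschitz w.r.t. the 2-adic metric. -/
def Compatible (f : ℤ_[2] → ℤ_[2]) : Prop := ∀ x y : ℤ_[2], ‖f x - f y‖ ≤ ‖x - y‖

/-- Reduction of a 2-adic integer modulo `2^n`. -/
noncomputable def padMod (n : ℕ) (x : ℤ_[2]) : ZMod (2^n) := (x.appr n : ZMod (2^n))

/-- The map induced by `f : ℤ₂ → ℤ₂` on `ZMod (2^n)` (via canonical lifts). -/
noncomputable def inducedMap (n : ℕ) (f : ℤ_[2] → ℤ_[2]) : ZMod (2^n) → ZMod (2^n) :=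
  fun a => padMod n (f ((a.val : ℕ) : ℤ_[2]))

/-- A self-map of a set is a single cycle (transitive on points). -/
def IsSingleCycle {α : Type*} (g : α → α) : Prop := ∀ a b : α, ∃ k : ℕ, g^[k] a = b

/-- Measure preservation: `f` induces a bijection modulo `2^n` for every `n`. -/
def MeasurePreservingZ (f : ℤ_[2] → ℤ_[2]) : Prop := ∀ n : ℕ, Function.Bijective (inducedMap n f)

/-- Ergodicity: `f` induces a single-cycle permutation modulo `2^n` for every `n`. -/
def ErgodicZ (f : ℤ_[2] → ℤ_[2]) : Prop := ∀ n : ℕ, IsSingleCycle (inducedMap n f)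

/-- Induced map modulo `2^n` of an `m`-variate map on `(ℤ₂)^m`. -/
noncomputable def inducedMapM (m n : ℕ) (G : (Fin m → ℤ_[2]) → Fin m → ℤ_[2]) :
    (Fin m → ZMod (2^n)) → Fin m → ZMod (2^n) :=
  fun a j => padMod n (G (fun i => (((a i).val : ℕ) : ℤ_[2])) j)

/-- Coordinatewise compatibility of an `m`-variate map. -/
def CompatibleM (m : ℕ) (G : (Fin m → ℤ_[2]) → Fin m → ℤ_[2]) : Prop :=
  ∀ (n : ℕ) (x y : Fin m → ℤ_[2]), (∀ i, padMod n (x i) = padMod n (y i)) →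
    ∀ j, padMod n (G x j) = padMod n (G y j)

/-- Ergodicity of an `m`-variate map: single cycle modulo `2^n` for all `n`. -/
def ErgodicM (m : ℕ) (G : (Fin m → ℤ_[2]) → Fin m → ℤ_[2]) : Prop :=
  ∀ n : ℕ, IsSingleCycle (inducedMapM m n G)

/-- The 2-adic integer with prescribed binary digits. -/
noncomputable def ofBits (b : ℕ → ZMod 2) : ℤ_[2] := ∑' i : ℕ, ((b i).val : ℤ_[2]) * 2^i

/-- Bitwise XOR of 2-adic integers. -/
noncomputable def xor2 (x y : ℤ_[2]) : ℤ_[2] := ofBits (fun i => bit2 i x + bit2 i y)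

/-- Bitwise AND of 2-adic integers. -/
noncomputable def and2 (x y : ℤ_[2]) : ℤ_[2] := ofBits (fun i => bit2 i x * bit2 i y)

/-- Bitwise AND of a list, the empty AND being `-1` (the all-ones string). -/
noncomputable def andL (l : List ℤ_[2]) : ℤ_[2] := l.foldr and2 (-1)

-- ########## auxiliary lemmas ##########

lemma dvd_iff_norm_le {x : ℤ_[2]} {n : ℕ} :
    ((2:ℤ_[2])^n) ∣ x ↔ ‖x‖ ≤ (2:ℝ) ^ (-n : ℤ) := by
  rw [show ((2:ℤ_[2])) = ((2:ℕ):ℤ_[2]) by norm_num,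
    ← Ideal.mem_span_singleton, ← PadicInt.norm_le_pow_iff_mem_span_pow]
  norm_num

lemma appr_dvd (n : ℕ) (x : ℤ_[2]) : ((2:ℤ_[2])^n) ∣ (x - (x.appr n : ℤ_[2])) := by
  have := PadicInt.appr_spec n x
  rw [Ideal.mem_span_singleton] at this
  simpa using this

lemma appr_eq_of_dvd {n c : ℕ} {x : ℤ_[2]} (hc : c < 2^n)
    (h : ((2:ℤ_[2])^n) ∣ (x - (c:ℤ_[2]))) : x.appr n = c := by
  have hs := appr_dvd n x
  have hd : ((2:ℤ_[2])^n) ∣ ((((x.appr n : ℤ) - (c:ℤ)) : ℤ) : ℤ_[2]) := by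
    push_cast
    have heq : ((x.appr n : ℤ_[2]) - (c:ℤ_[2])) = (x - c) - (x - x.appr n) := by ring
    rw [heq]; exact dvd_sub h hs
  have hzd : ((2:ℤ)^n) ∣ ((x.appr n : ℤ) - c) := by
    have := (PadicInt.norm_int_le_pow_iff_dvd (p:=2) (k := (x.appr n : ℤ) - c) (n := n)).mp
      (by simpa using dvd_iff_norm_le.mp hd)
    exact_mod_cast this
  have h1 : ((x.appr n : ℤ) - c) = 0 := by
    apply Int.eq_zero_of_abs_lt_dvd hzd
    have h2 := PadicInt.appr_lt x n
    have hb : ((2:ℤ))^n = ((2^n : ℕ) : ℤ) := by push_cast; ring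
    rw [abs_lt, hb]
    omega
  omega

lemma dvd_iff_appr_eq {n : ℕ} {x y : ℤ_[2]} :
    ((2:ℤ_[2])^n) ∣ (x - y) ↔ x.appr n = y.appr n := by
  have hsx := appr_dvd n x
  have hsy := appr_dvd n y
  constructor
  · intro h
    apply appr_eq_of_dvd (PadicInt.appr_lt y n)
    have heq : x - (y.appr n : ℤ_[2]) = (x - y) + (y - y.appr n) := by ring
    rw [heq]; exact dvd_add h hsy
  · intro h
    have h2 := dvd_sub hsx hsy
    rw [h] at h2
    have heq : x - ((y.appr n : ℕ) : ℤ_[2]) - (y - ((y.appr n : ℕ) : ℤ_[2])) = x - y := by ring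
    rwa [heq] at h2

lemma padMod_eq_iff {n : ℕ} {x y : ℤ_[2]} :
    padMod n x = padMod n y ↔ x.appr n = y.appr n := by
  unfold padMod
  constructor
  · intro h
    have hx := ZMod.val_cast_of_lt (PadicInt.appr_lt x n)
    have hy := ZMod.val_cast_of_lt (PadicInt.appr_lt y n)
    rw [← hx, ← hy, h]
  · intro h; rw [h]

lemma appr_mod_pow {j n : ℕ} (h : j ≤ n) (x : ℤ_[2]) : x.appr j = x.appr n % 2^j := by
  obtain ⟨k, hk⟩ := PadicInt.dvd_appr_sub_appr x j n h
  have hm := PadicInt.appr_mono x h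
  have hl := PadicInt.appr_lt x j
  have heq : x.appr n = 2^j * k + x.appr j := by omega
  rw [heq, Nat.mul_add_mod, Nat.mod_eq_of_lt hl]

lemma bit2_eq {j n : ℕ} (h : j < n) (x : ℤ_[2]) :
    bit2 j x = ((x.appr n / 2^j % 2 : ℕ) : ZMod 2) := by
  unfold bit2
  rw [appr_mod_pow (show j+1 ≤ n from h) x]
  congr 1
  rw [pow_succ]
  exact Nat.mod_mul_right_div_self _ _ _

lemma appr_succ_decomp (x : ℤ_[2]) (n : ℕ) :
    x.appr (n+1) = 2^n * (x.appr (n+1) / 2^n) + x.appr n := by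
  rw [appr_mod_pow (Nat.le_succ n) x]
  exact (Nat.div_add_mod _ _).symm

lemma appr_eq_iff_bits {n : ℕ} {x y : ℤ_[2]} :
    x.appr n = y.appr n ↔ ∀ j < n, bit2 j x = bit2 j y := by
  constructor
  · intro h j hj
    rw [bit2_eq hj x, bit2_eq hj y, h]
  · intro h
    induction n with
    | zero => rfl
    | succ n ih =>
      have hn : x.appr n = y.appr n := ih (fun j hj => h j (Nat.lt_succ_of_lt hj))
      have hbx := h n (Nat.lt_succ_self n)
      unfold bit2 at hbx
      have qx : x.appr (n+1) / 2^n < 2 := by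
        have := PadicInt.appr_lt x (n+1)
        rw [pow_succ] at this
        exact Nat.div_lt_of_lt_mul this
      have qy : y.appr (n+1) / 2^n < 2 := by
        have := PadicInt.appr_lt y (n+1)
        rw [pow_succ] at this
        exact Nat.div_lt_of_lt_mul this
      have hq : x.appr (n+1) / 2^n = y.appr (n+1) / 2^n := by
        have := congrArg ZMod.val hbx
        rwa [ZMod.val_cast_of_lt qx, ZMod.val_cast_of_lt qy] at this
      rw [appr_succ_decomp x n, appr_succ_decomp y n, hq, hn]

lemma padMod_eq_iff_bits {n : ℕ} {x y : ℤ_[2]} :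
    padMod n x = padMod n y ↔ ∀ j < n, bit2 j x = bit2 j y := by
  rw [padMod_eq_iff, appr_eq_iff_bits]

lemma padMod_natCast (n c : ℕ) (hc : c < 2^n) : padMod n ((c:ℤ_[2])) = (c : ZMod (2^n)) := by
  unfold padMod
  rw [appr_eq_of_dvd hc (by simp)]

lemma padMod_lift (n : ℕ) (a : ZMod (2^n)) : padMod n ((a.val : ℕ) : ℤ_[2]) = a := by
  haveI : NeZero ((2:ℕ)^n) := ⟨pow_ne_zero n two_ne_zero⟩
  rw [padMod_natCast n a.val (ZMod.val_lt a)]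
  exact ZMod.natCast_rightInverse a

lemma compat_pad {H : ℤ_[2] → ℤ_[2]} (hHc : Compatible H) (N : ℕ) {z w : ℤ_[2]}
    (h : padMod N z = padMod N w) : padMod N (H z) = padMod N (H w) := by
  rw [padMod_eq_iff, ← dvd_iff_appr_eq, dvd_iff_norm_le] at h ⊢
  exact le_trans (hHc z w) h

/-- the conjugate under the bit-interleaving bijection `B` of a
compatible ergodic map `H : ℤ₂ → ℤ₂` is a compatible ergodic `m`-variate map. -/
theorem conjugate_compatible_ergodic (m : ℕ) (hm : 0 < m)
    (B : (Fin m → ℤ_[2]) → ℤ_[2])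
    (hB : ∀ (x : Fin m → ℤ_[2]) (k : ℕ),
      bit2 k (B x) = bit2 (k / m) (x ⟨k % m, Nat.mod_lt k hm⟩))
    (H : ℤ_[2] → ℤ_[2]) (hHc : Compatible H) (hHe : ErgodicZ H)
    (G : (Fin m → ℤ_[2]) → Fin m → ℤ_[2])
    (hG : ∀ x, B (G x) = H (B x)) :
    CompatibleM m G ∧ ErgodicM m G := by
  have hBbits : ∀ (n : ℕ) (x y : Fin m → ℤ_[2]),
      (∀ i, padMod n (x i) = padMod n (y i)) ↔ padMod (n*m) (B x) = padMod (n*m) (B y) := by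
    intro n x y
    rw [padMod_eq_iff_bits]
    constructor
    · intro h k hk
      rw [hB x k, hB y k]
      have hkm : k / m < n := (Nat.div_lt_iff_lt_mul hm).mpr hk
      exact (padMod_eq_iff_bits.mp (h _)) _ hkm
    · intro h i
      rw [padMod_eq_iff_bits]
      intro j hj
      have hi : i.val < m := i.isLt
      have hk : j*m + i.val < n*m := by
        calc j*m + i.val < j*m + m := by omega
          _ = (j+1)*m := by ring
          _ ≤ n*m := Nat.mul_le_mul_right m hj
      have h1 := h (j*m + i.val) hk
      rw [hB x (j*m+i.val), hB y (j*m+i.val)] at h1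
      have hd : (j*m + i.val) / m = j := by
        rw [add_comm, Nat.add_mul_div_right _ _ hm, Nat.div_eq_of_lt hi, zero_add]
      have hmm : (j*m + i.val) % m = i.val := by
        rw [add_comm, Nat.add_mul_mod_self_right, Nat.mod_eq_of_lt hi]
      have hfin : (⟨(j*m + i.val) % m, Nat.mod_lt _ hm⟩ : Fin m) = i := by
        ext; exact hmm
      rw [hd, hfin] at h1
      exact h1
  constructor
  · intro n x y hxy j
    have h1 := (hBbits n x y).mp hxy
    have h2 : padMod (n*m) (B (G x)) = padMod (n*m) (B (G y)) := by
      rw [hG, hG]; exact compat_pad hHc _ h1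
    exact (hBbits n (G x) (G y)).mpr h2 j
  · intro n
    set N := n*m with hN
    set lift : (Fin m → ZMod (2^n)) → (Fin m → ℤ_[2]) :=
      fun a i => (((a i).val : ℕ) : ℤ_[2]) with hlift_def
    set Φ : (Fin m → ZMod (2^n)) → ZMod (2^N) :=
      fun a => padMod N (B (lift a)) with hΦ_def
    have hlift : ∀ a i, padMod n (lift a i) = a i := fun a i => padMod_lift n (a i)
    have hΦinj : Function.Injective Φ := by
      intro a b hab
      funext i
      have h := ((hBbits n (lift a) (lift b)).mpr hab) i
      rwa [hlift, hlift] at h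
    have hconj : ∀ a, Φ (inducedMapM m n G a) = inducedMap N H (Φ a) := by
      intro a
      have l1 : ∀ i, padMod n (lift (inducedMapM m n G a) i) = padMod n (G (lift a) i) := by
        intro i; rw [hlift]; rfl
      have r1 : padMod N (((Φ a).val : ℕ) : ℤ_[2]) = padMod N (B (lift a)) :=
        padMod_lift N (Φ a)
      calc Φ (inducedMapM m n G a) = padMod N (B (G (lift a))) := (hBbits n _ _).mp l1
        _ = padMod N (H (B (lift a))) := by rw [hG]
        _ = padMod N (H (((Φ a).val : ℕ) : ℤ_[2])) := (compat_pad hHc N r1).symm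
        _ = inducedMap N H (Φ a) := rfl
    have hiter : ∀ (k : ℕ) a, Φ ((inducedMapM m n G)^[k] a) = (inducedMap N H)^[k] (Φ a) := by
      intro k
      induction k with
      | zero => intro a; rfl
      | succ k ih =>
        intro a
        rw [Function.iterate_succ_apply, Function.iterate_succ_apply, ih, hconj]
    intro a b
    obtain ⟨k, hk⟩ := hHe N (Φ a) (Φ b)
    exact ⟨k, hΦinj (by rw [hiter k a, hk])⟩
end

section
/- A compatible mapping T : Z_2 → Z_2 preserves the Haar measure (equivalently, induces a permutation on Z/2^n Z for every n ≥ 1) if and only if for each i ≥ 0 the Boolean function δ_i(T(x)), viewed as a function of the bits χ_0,...,χ_i of x, has the form χ_i + φ_i(χ_0,...,χ_{i-1}) for some Boolean function φ_i in the lower-order bits only. -/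
open scoped BigOperators

/-!
Bit `i` is the top digit of the residue mod `2^(i+1)`. If `x ≡ y (mod 2^i)`, compatibility gives
`T x ≡ T y (mod 2^i)`, and injectivity of `T` mod `2^(i+1)` then says that bit `i` of `T x` and
`T y` agree exactly when bit `i` of `x` and `y` do. Over `ZMod 2` this means that
`δ_i(T x) - χ_i` takes the same value at `x` and `y`, i.e. it factors through the lower bits.
Conversely, if `δ_i(T x) = χ_i + φ_i(χ_0, …, χ_{i-1})` and `T x ≡ T y (mod 2^n)`, the bits of `x`
and `y` agree, as one sees one bit at a time from the bottom up.
-/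

namespace PadicInt

variable {p : ℕ} [Fact p.Prime]

theorem appr_mod_pow (x : ℤ_[p]) {m n : ℕ} (h : m ≤ n) : x.appr n % p ^ m = x.appr m := by
  obtain ⟨c, hc⟩ := x.dvd_appr_sub_appr m n h
  rw [Nat.eq_add_of_sub_eq (x.appr_mono h) hc, Nat.mul_add_mod, Nat.mod_eq_of_lt (x.appr_lt m)]

theorem appr_succ_div_pow_lt (x : ℤ_[p]) (i : ℕ) : x.appr (i + 1) / p ^ i < p :=
  Nat.div_lt_of_lt_mul (pow_succ p i ▸ x.appr_lt (i + 1))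

end PadicInt

variable {T : ℤ_[2] → ℤ_[2]} {i n : ℕ} {x y : ℤ_[2]}

theorem padMod_eq_iff_appr_eq : padMod n x = padMod n y ↔ x.appr n = y.appr n := by
  rw [padMod, padMod, ZMod.natCast_eq_natCast_iff', Nat.mod_eq_of_lt (x.appr_lt n),
    Nat.mod_eq_of_lt (y.appr_lt n)]

theorem bit2_eq_iff : bit2 i x = bit2 i y ↔ x.appr (i + 1) / 2 ^ i = y.appr (i + 1) / 2 ^ i := by
  rw [bit2, bit2, ZMod.natCast_eq_natCast_iff', Nat.mod_eq_of_lt (x.appr_succ_div_pow_lt i),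
    Nat.mod_eq_of_lt (y.appr_succ_div_pow_lt i)]

theorem padMod_succ_eq_iff :
    padMod (i + 1) x = padMod (i + 1) y ↔ padMod i x = padMod i y ∧ bit2 i x = bit2 i y := by
  rw [padMod_eq_iff_appr_eq, padMod_eq_iff_appr_eq, bit2_eq_iff,
    ← x.appr_mod_pow i.le_succ, ← y.appr_mod_pow i.le_succ]
  constructor
  · intro h
    rw [h]
    exact ⟨rfl, rfl⟩
  · rintro ⟨hmod, hdiv⟩
    rw [← Nat.div_add_mod (x.appr (i + 1)) (2 ^ i), hmod, hdiv, Nat.div_add_mod]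

theorem padMod_eq_iff_forall_bit2_eq :
    padMod n x = padMod n y ↔ ∀ i < n, bit2 i x = bit2 i y := by
  induction n with
  | zero =>
    exact iff_of_true (Subsingleton.elim (α := ZMod 1) _ _) fun _ h => (Nat.not_lt_zero _ h).elim
  | succ n ih => rw [padMod_succ_eq_iff, ih, Nat.forall_lt_succ_right]

theorem padMod_eq_iff_norm_sub_le :
    padMod n x = padMod n y ↔ ‖x - y‖ ≤ ((2 : ℕ) : ℝ) ^ (-(n : ℤ)) := by
  show PadicInt.toZModPow n x = PadicInt.toZModPow n y ↔ _
  rw [← sub_eq_zero, ← map_sub, ← RingHom.mem_ker, PadicInt.ker_toZModPow,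
    PadicInt.norm_le_pow_iff_mem_span_pow]

theorem padMod_natCast_val (a : ZMod (2 ^ n)) : padMod n ((a.val : ℕ) : ℤ_[2]) = a := by
  show PadicInt.toZModPow n (a.val : ℤ_[2]) = a
  rw [map_natCast, ZMod.natCast_val, ZMod.cast_id]

theorem Compatible.padMod_eq (hT : Compatible T) (h : padMod n x = padMod n y) :
    padMod n (T x) = padMod n (T y) := by
  rw [padMod_eq_iff_norm_sub_le] at h ⊢
  exact (hT x y).trans h

theorem Compatible.inducedMap_padMod (hT : Compatible T) (n : ℕ) (x : ℤ_[2]) :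
    inducedMap n T (padMod n x) = padMod n (T x) :=
  hT.padMod_eq (padMod_natCast_val _)

def InjectiveModPow (T : ℤ_[2] → ℤ_[2]) : Prop :=
  ∀ n x y, padMod n (T x) = padMod n (T y) → padMod n x = padMod n y

theorem Compatible.measurePreservingZ_iff_injectiveModPow (hT : Compatible T) :
    MeasurePreservingZ T ↔ InjectiveModPow T := by
  refine forall_congr' fun n => ?_
  rw [← Finite.injective_iff_bijective]
  constructor
  · intro hinj x y h
    apply hinj
    rwa [hT.inducedMap_padMod, hT.inducedMap_padMod]
  · intro h a b hab
    rw [← padMod_natCast_val a, ← padMod_natCast_val b]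
    exact h _ _ hab

theorem ZMod.sub_eq_sub_of_eq_iff_eq_two {a b c d : ZMod 2} (h : a = b ↔ c = d) :
    a - c = b - d := by
  revert a b c d
  decide

theorem Compatible.bit2_eq_iff_of_padMod_eq (hT : Compatible T)
    (hinj : padMod (i + 1) (T x) = padMod (i + 1) (T y) → padMod (i + 1) x = padMod (i + 1) y)
    (h : padMod i x = padMod i y) : bit2 i (T x) = bit2 i (T y) ↔ bit2 i x = bit2 i y := by
  constructor
  · intro hbitT
    exact (padMod_succ_eq_iff.1 (hinj (padMod_succ_eq_iff.2 ⟨hT.padMod_eq h, hbitT⟩))).2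
  · intro hbit
    exact (padMod_succ_eq_iff.1 (hT.padMod_eq (padMod_succ_eq_iff.2 ⟨h, hbit⟩))).2

theorem Compatible.exists_bit_form_of_injectiveModPow (hT : Compatible T)
    (hinj : InjectiveModPow T) (i : ℕ) :
    ∃ φ : (Fin i → ZMod 2) → ZMod 2,
      ∀ x : ℤ_[2], bit2 i (T x) = bit2 i x + φ (fun s => bit2 (s : ℕ) x) := by
  obtain ⟨φ, hφ⟩ := (Function.factorsThrough_iff (fun x => bit2 i (T x) - bit2 i x)
    (f := fun x (s : Fin i) => bit2 (s : ℕ) x)).1 fun x y hxy => by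
      have h : padMod i x = padMod i y :=
        padMod_eq_iff_forall_bit2_eq.2 fun s hs => congrFun hxy ⟨s, hs⟩
      exact ZMod.sub_eq_sub_of_eq_iff_eq_two (hT.bit2_eq_iff_of_padMod_eq (hinj _ _ _) h)
  exact ⟨φ, fun x => sub_eq_iff_eq_add'.1 (congrFun hφ x)⟩

theorem injectiveModPow_of_bit_form
    (hform : ∀ i : ℕ, ∃ φ : (Fin i → ZMod 2) → ZMod 2,
      ∀ x : ℤ_[2], bit2 i (T x) = bit2 i x + φ (fun s => bit2 (s : ℕ) x)) :
    InjectiveModPow T := by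
  intro n
  induction n with
  | zero => exact fun _ _ _ => Subsingleton.elim (α := ZMod 1) _ _
  | succ n ih =>
    intro x y h
    rw [padMod_succ_eq_iff] at h ⊢
    have hlow := ih x y h.1
    have hbits : (fun s : Fin n => bit2 (s : ℕ) x) = fun s : Fin n => bit2 (s : ℕ) y :=
      funext fun s => padMod_eq_iff_forall_bit2_eq.1 hlow s s.2
    obtain ⟨φ, hφ⟩ := hform n
    have htop := h.2
    rw [hφ x, hφ y, hbits] at htop
    exact ⟨hlow, add_right_cancel htop⟩

/-- a compatible `T : ℤ₂ → ℤ₂` preserves measure iff for each `i`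
the `i`-th bit of `T x` equals `χ_i + φ_i(χ_0,…,χ_{i-1})` for some Boolean
function `φ_i` of the lower-order bits only. -/
theorem measurePreserving_iff_bit_form (T : ℤ_[2] → ℤ_[2]) (hT : Compatible T) :
    MeasurePreservingZ T ↔
      ∀ i : ℕ, ∃ φ : (Fin i → ZMod 2) → ZMod 2,
        ∀ x : ℤ_[2], bit2 i (T x) = bit2 i x + φ (fun s => bit2 (s : ℕ) x) := by
  rw [hT.measurePreservingZ_iff_injectiveModPow]
  exact ⟨hT.exists_bit_form_of_injectiveModPow, injectiveModPow_of_bit_form⟩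
end
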